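/- Let N ≥ 1, let K be a nonempty subset of ℒ(𝒳^N) and let P : K → ℝ. Define H := {MuHy^N(f|·) : f ∈ K} ⊆ ℒ(𝒩^N) and, for g ∈ H, Q(g) := sup{P(f) : f ∈ K, MuHy^N(f|·) = g}. Assume Q is real-valued on H and avoids sure loss (for every n ≥ 0, g₁,…,g_n ∈ H and λ₁,…,λ_n ≥ 0: max_{m∈𝒩^N} Σ_k λ_k (g_k(m) − Q(g_k)) ≥ 0). Then the point-wise smallest coherent exchangeable lower prevision on ℒ(𝒳^N) dominating P on K is the exchangeable natural extension f ↦ E_Q(MuHy^N(f|·)), where E_Q is the natural extension of Q: E_Q(h) := sup{ min_{m∈𝒩^N} [h(m) − Σ_{k=1}^n λ_k (g_k(m) − Q(g_k))] : n ≥ 0, λ_k ≥ 0, g_k ∈ H } for h ∈ ℒ(𝒩^N). -/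

import Mathlib

open Finset Filter Topology

/-- A coherent lower prevision on the gambles over a finite nonempty space `Ω`. -/
def LowerPrevCoherent {Ω : Type*} [Fintype Ω] [Nonempty Ω] (P : (Ω → ℝ) → ℝ) : Prop :=
  (∀ f : Ω → ℝ, sInf (Set.range f) ≤ P f) ∧
  (∀ (f : Ω → ℝ) (l : ℝ), 0 ≤ l → P (fun ω => l * f ω) = l * P f) ∧
  (∀ f g : Ω → ℝ, P f + P g ≤ P (f + g))

/-- A linear prevision on the gambles over a finite nonempty space `Ω`. -/
def LinearPrevision {Ω : Type*} [Fintype Ω] [Nonempty Ω] (P : (Ω → ℝ) → ℝ) : Prop :=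
  (∀ f g : Ω → ℝ, P (f + g) = P f + P g) ∧
  (∀ (l : ℝ) (f : Ω → ℝ), P (fun ω => l * f ω) = l * P f) ∧
  (∀ f : Ω → ℝ, (∀ ω, 0 ≤ f ω) → 0 ≤ P f) ∧
  P (fun _ => 1) = 1

/-- Exchangeability of a lower prevision on gambles on `X^N`:
`P (πf − f) ≥ 0` for every gamble `f` and every permutation `π`. -/
def Exchangeable {X : Type*} {N : ℕ} (P : ((Fin N → X) → ℝ) → ℝ) : Prop :=
  ∀ (f : (Fin N → X) → ℝ) (π : Equiv.Perm (Fin N)),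
    0 ≤ P (fun x => f (fun k => x (π k)) - f x)

/-- The set of count vectors `𝒩^n`. -/
abbrev CVec (X : Type*) [Fintype X] (n : ℕ) : Type _ := {m : X → ℕ // ∑ x, m x = n}

noncomputable instance {X : Type*} [Fintype X] [DecidableEq X] (n : ℕ) : Fintype (CVec X n) := by
  have key : ∀ (m : CVec X n) (x : X), m.1 x < n + 1 := by
    intro m x
    have h1 : m.1 x ≤ ∑ y, m.1 y :=
      Finset.single_le_sum (fun i _ => Nat.zero_le _) (Finset.mem_univ x)
    have h2 := m.2
    omega
  exact Fintype.ofInjective (fun m : CVec X n => fun x => (⟨m.1 x, key m x⟩ : Fin (n+1)))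
    (fun a b hab => Subtype.ext (funext fun x => congrArg Fin.val (congrFun hab x)))

instance {X : Type*} [Fintype X] [DecidableEq X] [Nonempty X] (n : ℕ) :
    Nonempty (CVec X n) :=
  ⟨⟨fun x => if x = Classical.arbitrary X then n else 0, by simp⟩⟩

/-- The counting map `T^n : X^n → 𝒩^n`. -/
def countMap {X : Type*} [Fintype X] [DecidableEq X] (n : ℕ) (z : Fin n → X) : CVec X n :=
  ⟨fun x => (Finset.univ.filter fun k => z k = x).card, by
    have h := Finset.card_eq_sum_card_fiberwise (f := z) (s := Finset.univ) (t := Finset.univ)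
      (fun k _ => Finset.mem_univ (z k))
    simpa using h.symm⟩

/-- `ν(m) = n!/∏ₓ mₓ!` for a count vector `m ∈ 𝒩^n`. -/
def nu {X : Type*} [Fintype X] {n : ℕ} (m : CVec X n) : ℕ :=
  Nat.multinomial Finset.univ m.1

/-- `ν(μ − m)`, which is `0` unless `m ≤ μ` componentwise. -/
def nuSub {X : Type*} [Fintype X] {n k : ℕ} (μ : CVec X (n + k)) (m : CVec X n) : ℕ :=
  if ∀ x, m.1 x ≤ μ.1 x then Nat.multinomial Finset.univ (fun x => μ.1 x - m.1 x) else 0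

/-- The multiple hyper-geometric prevision `MuHy^n(f|m) = (1/ν(m)) ∑_{z∈[m]} f(z)`. -/
noncomputable def MuHy {X : Type*} [Fintype X] [DecidableEq X] {n : ℕ}
    (f : (Fin n → X) → ℝ) (m : CVec X n) : ℝ :=
  (∑ z ∈ Finset.univ.filter fun z : Fin n → X => countMap n z = m, f z) / (nu m : ℝ)

/-- The `X`-simplex `Σ_X`, as a subtype of `X → ℝ`. -/
abbrev SimplexPt (X : Type*) [Fintype X] : Type _ :=
  {θ : X → ℝ // (∀ x, 0 ≤ θ x) ∧ ∑ x, θ x = 1}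

/-- The Bernstein basis polynomial `B_m(θ) = ν(m) ∏ₓ θₓ^{mₓ}`. -/
noncomputable def Bern {X : Type*} [Fintype X] {n : ℕ} (m : CVec X n) (θ : X → ℝ) : ℝ :=
  (nu m : ℝ) * ∏ x, θ x ^ m.1 x

/-- The count multinomial expectation `CoMn^n(g|θ) = ∑_m g(m) B_m(θ)`. -/
noncomputable def CoMn {X : Type*} [Fintype X] [DecidableEq X] {n : ℕ} (g : CVec X n → ℝ) (θ : X → ℝ) : ℝ :=
  ∑ m : CVec X n, g m * Bern m θ

/-- The multinomial expectation `Mn^n(f|θ) = ∑_z f(z) ∏ₓ θₓ^{Tₓ(z)}`. -/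
noncomputable def Mn {X : Type*} [Fintype X] [DecidableEq X] {n : ℕ}
    (f : (Fin n → X) → ℝ) (θ : X → ℝ) : ℝ :=
  ∑ z : Fin n → X, f z * ∏ x, θ x ^ (countMap n z).1 x

/-- `CoMn^n(g|·)` as a function on the simplex. -/
noncomputable def CoMnP {X : Type*} [Fintype X] [DecidableEq X] {n : ℕ} (g : CVec X n → ℝ)
    (θ : SimplexPt X) : ℝ :=
  CoMn g θ.1

/-- `Mn^n(f|·)` as a function on the simplex. -/
noncomputable def MnP {X : Type*} [Fintype X] [DecidableEq X] {n : ℕ}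
    (f : (Fin n → X) → ℝ) (θ : SimplexPt X) : ℝ :=
  Mn f θ.1

/-- Polynomial gambles on the simplex: the set `𝒱(Σ_X)`. -/
def IsPolyGamble {X : Type*} [Fintype X] [DecidableEq X] (p : SimplexPt X → ℝ) : Prop :=
  ∃ n : ℕ, 1 ≤ n ∧ ∃ g : CVec X n → ℝ, p = fun θ => CoMnP g θ

/-- Coherence of a functional on the linear space `𝒱(Σ_X)` of polynomial gambles. -/
def CoherentOnPoly {X : Type*} [Fintype X] [DecidableEq X] (S : (SimplexPt X → ℝ) → ℝ) : Prop :=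
  (∀ p, IsPolyGamble p → sInf (Set.range p) ≤ S p) ∧
  (∀ p, IsPolyGamble p → ∀ l : ℝ, 0 ≤ l → S (fun θ => l * p θ) = l * S p) ∧
  (∀ p q, IsPolyGamble p → IsPolyGamble q → S p + S q ≤ S (p + q))

/-- Cylindrical extension of a gamble on `X^n` to `X^{n+k}`. -/
def cylExt {X : Type*} {n k : ℕ} (f : (Fin n → X) → ℝ) : (Fin (n + k) → X) → ℝ :=
  fun z => f fun i => z (Fin.castLE (Nat.le_add_right n k) i)

/-- Time consistency of a family of lower previsions on the `X^n`. -/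
def PTimeConsistent {X : Type*} (P : ∀ n : ℕ, ((Fin n → X) → ℝ) → ℝ) : Prop :=
  ∀ n : ℕ, 1 ≤ n → ∀ (k : ℕ) (f : (Fin n → X) → ℝ), P n f = P (n + k) (cylExt f)

/-- Time consistency of a family of count lower previsions on the `𝒩^n`. -/
def QTimeConsistent {X : Type*} [Fintype X] [DecidableEq X] (Q : ∀ n : ℕ, (CVec X n → ℝ) → ℝ) : Prop :=
  ∀ n : ℕ, 1 ≤ n → ∀ (k : ℕ) (h : CVec X n → ℝ),
    Q n h = Q (n + k) (fun μ => ∑ m : CVec X n, ((nuSub μ m : ℝ) * (nu m : ℝ) / (nu μ : ℝ)) * h m)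

/-- The relative frequency vector `m/n ∈ Σ_X` of a count vector `m ∈ 𝒩^n`, `n ≥ 1`. -/
noncomputable def freqPt {X : Type*} [Fintype X] {n : ℕ} (hn : 0 < n) (m : CVec X n) :
    SimplexPt X :=
  ⟨fun x => (m.1 x : ℝ) / n,
   fun x => div_nonneg (Nat.cast_nonneg _) (Nat.cast_nonneg _),
   by
    rw [← Finset.sum_div]
    have h : (∑ x, (m.1 x : ℝ)) = (n : ℝ) := by exact_mod_cast m.2
    rw [h]
    exact div_self (Nat.cast_ne_zero.mpr hn.ne')⟩

/-- `ḡ(μ) = ∑_m (ν(m) ν(μ−m) / ν(μ)) g(m)`. -/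
noncomputable def gbar {X : Type*} [Fintype X] [DecidableEq X] {n k : ℕ}
    (g : CVec X n → ℝ) (μ : CVec X (n + k)) : ℝ :=
  ∑ m : CVec X n, ((nu m : ℝ) * (nuSub μ m : ℝ) / (nu μ : ℝ)) * g m


/-!
A coherent exchangeable lower prevision `E` gives `f` the same value as its average over all
reorderings of the sample, and since every atom `[m]` is a single orbit of the permutations, this
average is `z ↦ MuHy^N(f | T z)`. So `E f = E' (MuHy^N(f|·))` for the coherent lower prevision
`E' h := E (h ∘ T)` on the count vectors, and `E'` dominates `Q` on `H` as soon as `E` dominates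
`P` on `K`. The natural extension `E_Q` is below every such `E'`, and when `Q` avoids sure loss it
is itself coherent, which makes `f ↦ E_Q(MuHy^N(f|·))` coherent and exchangeable.
-/
open Equiv Nat

section Counting

variable {X : Type*} [Fintype X] [DecidableEq X] {N : ℕ}

theorem countMap_apply (z : Fin N → X) (x : X) :
    (countMap N z).1 x = Fintype.card {k // z k = x} := by
  rw [Fintype.card_subtype]; rfl

theorem countMap_comp_perm (z : Fin N → X) (π : Perm (Fin N)) :
    countMap N (z ∘ π) = countMap N z :=
  Subtype.ext <| funext fun x => by
    simp only [countMap_apply]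
    exact Fintype.card_congr (π.subtypeEquiv fun _ => Iff.rfl)

theorem exists_perm_comp_eq_of_countMap_eq {z z' : Fin N → X}
    (h : countMap N z = countMap N z') : ∃ π : Perm (Fin N), z ∘ π = z' := by
  have e : ∀ x, {k // z' k = x} ≃ {k // z k = x} := fun x =>
    Fintype.equivOfCardEq (by rw [← countMap_apply, ← countMap_apply, h])
  exact ⟨(sigmaFiberEquiv z').symm.trans ((sigmaCongrRight e).trans (sigmaFiberEquiv z)),
    funext fun k => (e (z' k) ⟨k, rfl⟩).2⟩

theorem exists_countMap_eq (m : CVec X N) : ∃ z : Fin N → X, countMap N z = m := by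
  have e : Fin N ≃ Σ x, Fin (m.1 x) := Fintype.equivOfCardEq (by simp [m.2])
  refine ⟨fun k => (e k).1, Subtype.ext <| funext fun x => ?_⟩
  rw [countMap_apply, Fintype.card_congr ((e.subtypeEquiv fun _ => Iff.rfl).trans
    (sigmaSubtype x)), Fintype.card_fin]

/-- The permutations carrying `z` to `z'` form a coset of the stabilizer of `z`. -/
theorem card_perm_comp_eq {z z' : Fin N → X} {π₀ : Perm (Fin N)} (h : z ∘ π₀ = z') :
    Fintype.card {π : Perm (Fin N) // z ∘ π = z'} = ∏ x, ((countMap N z).1 x)! := by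
  subst h
  have e : {π : Perm (Fin N) // z ∘ π = z ∘ π₀} ≃ {π : Perm (Fin N) // z ∘ π = z} :=
    (Equiv.mulRight π₀⁻¹).subtypeEquiv fun π => by
      simp only [coe_mulRight, Perm.coe_mul]
      constructor
      · intro h
        rw [← Function.comp_assoc, h, Function.comp_assoc]
        simp
      · intro h
        conv_rhs => rw [← h]
        ext; simp
  simp only [Fintype.card_congr e, countMap_apply]
  exact DomMulAct.stabilizer_card z

theorem card_filter_countMap_eq (m : CVec X N) : #{z | countMap N z = m} = nu m := by
  obtain ⟨z, rfl⟩ := exists_countMap_eq m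
  have hfiber : #{z' | countMap N z' = countMap N z} * ∏ x, ((countMap N z).1 x)! = N ! := by
    rw [← smul_eq_mul, ← sum_const, show N ! = #(univ : Finset (Perm (Fin N))) by
      rw [Finset.card_univ, Fintype.card_perm, Fintype.card_fin],
      card_eq_sum_card_fiberwise (f := fun π : Perm (Fin N) => z ∘ π)
        (t := {z' | countMap N z' = countMap N z}) (fun π _ => by simp [countMap_comp_perm])]
    refine sum_congr rfl fun z' hz' => ?_
    obtain ⟨π₀, hπ₀⟩ := exists_perm_comp_eq_of_countMap_eq (mem_filter.1 hz').2.symm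
    rw [← card_perm_comp_eq hπ₀, Fintype.card_subtype]
  have hspec := Nat.multinomial_spec univ (countMap N z).1
  rw [(countMap N z).2] at hspec
  exact Nat.eq_of_mul_eq_mul_left (prod_pos fun x _ => factorial_pos _)
    ((mul_comm _ _).trans (hfiber.trans hspec.symm))

end Counting

section PermAverage

variable {X : Type*} {N : ℕ}

noncomputable def permAverage (f : (Fin N → X) → ℝ) (z : Fin N → X) : ℝ :=
  (N ! : ℝ)⁻¹ * ∑ π : Perm (Fin N), f (z ∘ π)

theorem permAverage_comp_perm (f : (Fin N → X) → ℝ) (z : Fin N → X) (π₀ : Perm (Fin N)) :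
    permAverage f (z ∘ π₀) = permAverage f z := by
  unfold permAverage
  congr 1
  exact Fintype.sum_equiv (Equiv.mulLeft π₀) _ _ fun _ => rfl

end PermAverage

section MultipleHypergeometric

variable {X : Type*} [Fintype X] [DecidableEq X] {N : ℕ}

theorem MuHy_add (f g : (Fin N → X) → ℝ) (m : CVec X N) :
    MuHy (f + g) m = MuHy f m + MuHy g m := by
  simp only [MuHy, Pi.add_apply, sum_add_distrib, add_div]

theorem MuHy_sub (f g : (Fin N → X) → ℝ) (m : CVec X N) :
    MuHy (fun z => f z - g z) m = MuHy f m - MuHy g m := by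
  simp only [MuHy, sum_sub_distrib, sub_div]

theorem MuHy_const_mul (c : ℝ) (f : (Fin N → X) → ℝ) (m : CVec X N) :
    MuHy (fun z => c * f z) m = c * MuHy f m := by
  simp only [MuHy, ← mul_sum, mul_div_assoc]

theorem MuHy_sum {ι : Type*} (s : Finset ι) (t : ι → (Fin N → X) → ℝ) (m : CVec X N) :
    MuHy (fun z => ∑ i ∈ s, t i z) m = ∑ i ∈ s, MuHy (t i) m := by
  simp only [MuHy, sum_comm (s := s), sum_div]

theorem MuHy_comp_perm (f : (Fin N → X) → ℝ) (π : Perm (Fin N)) (m : CVec X N) :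
    MuHy (fun z => f (z ∘ π)) m = MuHy f m := by
  unfold MuHy
  congr 1
  refine sum_equiv (π.symm.arrowCongr (Equiv.refl X)) (fun z => ?_) (fun _ _ => rfl)
  rw [show π.symm.arrowCongr (Equiv.refl X) z = z ∘ π from rfl]
  simp [countMap_comp_perm]

theorem MuHy_mono {f g : (Fin N → X) → ℝ} (h : ∀ z, f z ≤ g z) (m : CVec X N) :
    MuHy f m ≤ MuHy g m :=
  div_le_div_of_nonneg_right (sum_le_sum fun z _ => h z) (Nat.cast_nonneg _)

theorem MuHy_eq_of_forall_countMap_eq {g : (Fin N → X) → ℝ} {m : CVec X N} {c : ℝ}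
    (h : ∀ z, countMap N z = m → g z = c) : MuHy g m = c := by
  have hnu : (nu m : ℝ) ≠ 0 := Nat.cast_ne_zero.2 (Nat.multinomial_pos _ _).ne'
  rw [MuHy, sum_congr rfl fun z hz => h z (mem_filter.1 hz).2, sum_const,
    card_filter_countMap_eq, nsmul_eq_mul, mul_div_cancel_left₀ _ hnu]

theorem iInf_le_MuHy (f : (Fin N → X) → ℝ) (m : CVec X N) : ⨅ z, f z ≤ MuHy f m :=
  calc ⨅ z, f z = MuHy (fun _ => ⨅ z, f z) m := (MuHy_eq_of_forall_countMap_eq fun _ _ => rfl).symm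
    _ ≤ MuHy f m := MuHy_mono (ciInf_le (Finite.bddBelow_range f)) m

theorem MuHy_permAverage (f : (Fin N → X) → ℝ) (m : CVec X N) :
    MuHy (permAverage f) m = MuHy f m := by
  unfold permAverage
  rw [MuHy_const_mul, MuHy_sum univ (fun (π : Perm (Fin N)) z => f (z ∘ π))]
  simp only [MuHy_comp_perm, sum_const, Finset.card_univ, Fintype.card_perm, Fintype.card_fin,
    nsmul_eq_mul]
  exact inv_mul_cancel_left₀ (by positivity) _

theorem MuHy_countMap_eq_permAverage (f : (Fin N → X) → ℝ) (z : Fin N → X) :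
    MuHy f (countMap N z) = permAverage f z := by
  rw [← MuHy_permAverage]
  refine MuHy_eq_of_forall_countMap_eq fun z' hz' => ?_
  obtain ⟨π, rfl⟩ := exists_perm_comp_eq_of_countMap_eq hz'.symm
  exact permAverage_comp_perm f z π

end MultipleHypergeometric

namespace LowerPrevCoherent

variable {Ω : Type*} [Fintype Ω] [Nonempty Ω] {P : (Ω → ℝ) → ℝ}

theorem apply_zero (hP : LowerPrevCoherent P) : P (fun _ => 0) = 0 := by
  simpa using hP.2.1 (fun _ => 0) 0 le_rfl

theorem const_le (hP : LowerPrevCoherent P) (c : ℝ) : c ≤ P fun _ => c := by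
  simpa using hP.1 fun _ => c

theorem apply_sub_const (hP : LowerPrevCoherent P) (f : Ω → ℝ) (c : ℝ) :
    P (fun ω => f ω - c) = P f - c := by
  have h₁ : P f + P (fun _ => -c) ≤ P fun ω => f ω - c :=
    (hP.2.2 f fun _ => -c).trans_eq (congrArg P (funext fun ω => (sub_eq_add_neg _ _).symm))
  have h₂ : (P fun ω => f ω - c) + P (fun _ => c) ≤ P f :=
    (hP.2.2 (fun ω => f ω - c) fun _ => c).trans_eq
      (congrArg P (funext fun ω => sub_add_cancel _ _))
  linarith [hP.const_le c, hP.const_le (-c)]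

theorem sum_le (hP : LowerPrevCoherent P) {ι : Type*} (s : Finset ι) (t : ι → Ω → ℝ) :
    ∑ i ∈ s, P (t i) ≤ P fun ω => ∑ i ∈ s, t i ω := by
  classical
  induction s using Finset.induction_on with
  | empty => simp [hP.apply_zero]
  | insert a s ha ih =>
    simp only [sum_insert ha]
    exact (add_le_add le_rfl ih).trans (hP.2.2 (t a) fun ω => ∑ i ∈ s, t i ω)

theorem comp {Ω' : Type*} [Fintype Ω'] [Nonempty Ω'] {P : (Ω' → ℝ) → ℝ}
    (hP : LowerPrevCoherent P) (e : Ω' → Ω) : LowerPrevCoherent fun h : Ω → ℝ => P (h ∘ e) :=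
  ⟨fun h => (le_ciInf fun ω' => ciInf_le (Finite.bddBelow_range h) (e ω')).trans (hP.1 _),
    fun h l hl => hP.2.1 (h ∘ e) l hl, fun h₁ h₂ => hP.2.2 (h₁ ∘ e) (h₂ ∘ e)⟩

end LowerPrevCoherent

section Exchangeable

variable {X : Type*} [Fintype X] [Nonempty X] {N : ℕ} {E : ((Fin N → X) → ℝ) → ℝ}

theorem Exchangeable.le_apply_comp_perm (hEx : Exchangeable E) (hE : LowerPrevCoherent E)
    (f : (Fin N → X) → ℝ) (π : Perm (Fin N)) : E f ≤ E fun z => f (z ∘ π) := by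
  have h := hE.2.2 f fun z => f (z ∘ π) - f z
  have hd : 0 ≤ E fun z => f (z ∘ π) - f z := hEx f π
  simp only [Pi.add_def, add_sub_cancel] at h
  linarith

theorem Exchangeable.apply_permAverage (hEx : Exchangeable E) (hE : LowerPrevCoherent E)
    (f : (Fin N → X) → ℝ) : E (permAverage f) = E f := by
  have hN : (0 : ℝ) < N ! := by positivity
  have hscale (g : (Fin N → X) → ℝ) : E (fun z => (N ! : ℝ)⁻¹ * g z) = (N ! : ℝ)⁻¹ * E g :=
    hE.2.1 g _ (by positivity)
  apply le_antisymm
  · -- `f` is its average plus a positive combination of the gambles `f - f ∘ π`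
    let r : (Fin N → X) → ℝ := fun z => (N ! : ℝ)⁻¹ * ∑ π : Perm (Fin N), (f z - f (z ∘ π))
    have hr : 0 ≤ E r := by
      refine (hscale _).symm ▸ mul_nonneg (by positivity) ((sum_nonneg fun π _ => ?_).trans
        (hE.sum_le (univ : Finset (Perm (Fin N))) fun π z => f z - f (z ∘ π)))
      simpa [Function.comp_def] using hEx (fun z => f (z ∘ π)) π⁻¹
    have hsplit : permAverage f + r = f := by
      ext z
      simp only [permAverage, r, Pi.add_apply, ← mul_add, ← sum_add_distrib, add_sub_cancel,
        sum_const, Finset.card_univ, Fintype.card_perm, Fintype.card_fin, nsmul_eq_mul]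
      exact inv_mul_cancel_left₀ hN.ne' _
    linarith [hsplit ▸ hE.2.2 (permAverage f) r]
  · calc E f = (N ! : ℝ)⁻¹ * ∑ π : Perm (Fin N), E f := by
          rw [sum_const, Finset.card_univ, Fintype.card_perm, Fintype.card_fin, nsmul_eq_mul,
            inv_mul_cancel_left₀ hN.ne']
      _ ≤ (N ! : ℝ)⁻¹ * ∑ π : Perm (Fin N), E fun z => f (z ∘ π) :=
          mul_le_mul_of_nonneg_left (sum_le_sum fun π _ => hEx.le_apply_comp_perm hE f π)
            (by positivity)
      _ ≤ E (permAverage f) :=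
          (hscale _).symm ▸ mul_le_mul_of_nonneg_left
            (hE.sum_le (univ : Finset (Perm (Fin N))) fun π z => f (z ∘ π)) (by positivity)

variable [DecidableEq X]

theorem LowerPrevCoherent.comp_MuHy {P : (CVec X N → ℝ) → ℝ} (hP : LowerPrevCoherent P) :
    LowerPrevCoherent fun f : (Fin N → X) → ℝ => P fun m => MuHy f m :=
  ⟨fun f => (le_ciInf (iInf_le_MuHy f)).trans (hP.1 _),
    fun f l hl => by simpa only [MuHy_const_mul] using hP.2.1 _ l hl,
    fun f g => (hP.2.2 _ _).trans_eq (congrArg P (funext fun m => (MuHy_add f g m).symm))⟩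

theorem LowerPrevCoherent.exchangeable_comp_MuHy {P : (CVec X N → ℝ) → ℝ}
    (hP : LowerPrevCoherent P) : Exchangeable fun f : (Fin N → X) → ℝ => P fun m => MuHy f m :=
  fun f π => by
    have h (m : CVec X N) : MuHy (fun z => f fun k => z (π k)) m = MuHy f m := MuHy_comp_perm f π m
    simp only [MuHy_sub, h, sub_self, hP.apply_zero, le_refl]

theorem Exchangeable.apply_MuHy_countMap (hEx : Exchangeable E) (hE : LowerPrevCoherent E)
    (f : (Fin N → X) → ℝ) : E (fun z => MuHy f (countMap N z)) = E f := by
  simpa only [MuHy_countMap_eq_permAverage] using hEx.apply_permAverage hE f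

end Exchangeable

section NaturalExtension

variable {Ω : Type*} (H : Set (Ω → ℝ)) (Q : (Ω → ℝ) → ℝ)

/-- The gambles that the assessment `Q` on `H` makes almost desirable. -/
def gainCone : Set (Ω → ℝ) :=
  {c | ∃ (n : ℕ) (gs : Fin n → Ω → ℝ) (lam : Fin n → ℝ), (∀ i, gs i ∈ H) ∧ (∀ i, 0 ≤ lam i) ∧
    c = fun ω => ∑ i, lam i * (gs i ω - Q (gs i))}

def AvoidsSureLoss : Prop := ∀ c ∈ gainCone H Q, ∃ ω, 0 ≤ c ω

noncomputable def natExt (h : Ω → ℝ) : ℝ := ⨆ c : gainCone H Q, ⨅ ω, h ω - c.1 ω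

variable {H Q}

theorem zero_mem_gainCone : (0 : Ω → ℝ) ∈ gainCone H Q :=
  ⟨0, Fin.elim0, Fin.elim0, fun i => i.elim0, fun i => i.elim0, by simp; rfl⟩

instance : Nonempty (gainCone H Q) := ⟨⟨0, zero_mem_gainCone⟩⟩

theorem sub_mem_gainCone {g : Ω → ℝ} (hg : g ∈ H) : (fun ω => g ω - Q g) ∈ gainCone H Q :=
  ⟨1, fun _ => g, fun _ => 1, fun _ => hg, fun _ => zero_le_one, by simp⟩

theorem add_mem_gainCone {c d : Ω → ℝ} (hc : c ∈ gainCone H Q) (hd : d ∈ gainCone H Q) :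
    c + d ∈ gainCone H Q := by
  obtain ⟨n, gs, lam, hgs, hlam, rfl⟩ := hc
  obtain ⟨n', gs', lam', hgs', hlam', rfl⟩ := hd
  refine ⟨n + n', Fin.append gs gs', Fin.append lam lam', ?_, ?_, ?_⟩
  · simp [Fin.forall_fin_add, hgs, hgs']
  · simp [Fin.forall_fin_add, hlam, hlam']
  · ext ω
    simp [Fin.sum_univ_add]

theorem const_mul_mem_gainCone {c : Ω → ℝ} (hc : c ∈ gainCone H Q) {l : ℝ} (hl : 0 ≤ l) :
    (fun ω => l * c ω) ∈ gainCone H Q := by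
  obtain ⟨n, gs, lam, hgs, hlam, rfl⟩ := hc
  refine ⟨n, gs, fun i => l * lam i, hgs, fun i => mul_nonneg hl (hlam i), ?_⟩
  ext ω
  simp [mul_sum, mul_assoc]

theorem natExt_eq_sSup (h : Ω → ℝ) :
    natExt H Q h = sSup {r | ∃ (n : ℕ) (gs : Fin n → Ω → ℝ) (lam : Fin n → ℝ),
      (∀ i, gs i ∈ H) ∧ (∀ i, 0 ≤ lam i) ∧
      r = sInf (Set.range fun ω => h ω - ∑ i, lam i * (gs i ω - Q (gs i)))} := by
  refine congrArg sSup (Set.ext fun r => ⟨?_, ?_⟩)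
  · rintro ⟨⟨_, n, gs, lam, hgs, hlam, rfl⟩, rfl⟩
    exact ⟨n, gs, lam, hgs, hlam, rfl⟩
  · rintro ⟨n, gs, lam, hgs, hlam, rfl⟩
    exact ⟨⟨_, n, gs, lam, hgs, hlam, rfl⟩, rfl⟩

variable [Fintype Ω]

section AvoidsSureLoss

variable (hQ : AvoidsSureLoss H Q)
include hQ

theorem iInf_sub_le_iSup {c : Ω → ℝ} (hc : c ∈ gainCone H Q) (h : Ω → ℝ) :
    ⨅ ω, h ω - c ω ≤ ⨆ ω, h ω := by
  obtain ⟨ω, hω⟩ := hQ c hc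
  calc ⨅ ω, h ω - c ω ≤ h ω - c ω := ciInf_le (Finite.bddBelow_range _) ω
    _ ≤ h ω := by linarith
    _ ≤ ⨆ ω, h ω := le_ciSup (Finite.bddAbove_range h) ω

theorem bddAbove_range_natExt (h : Ω → ℝ) :
    BddAbove (Set.range fun c : gainCone H Q => ⨅ ω, h ω - c.1 ω) :=
  ⟨_, by rintro _ ⟨c, rfl⟩; exact iInf_sub_le_iSup hQ c.2 h⟩

theorem le_natExt {c : Ω → ℝ} (hc : c ∈ gainCone H Q) (h : Ω → ℝ) :
    ⨅ ω, h ω - c ω ≤ natExt H Q h :=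
  le_ciSup (bddAbove_range_natExt hQ h) ⟨c, hc⟩

theorem iInf_le_natExt (h : Ω → ℝ) : ⨅ ω, h ω ≤ natExt H Q h := by
  simpa using le_natExt hQ zero_mem_gainCone h

theorem natExt_le_iSup (h : Ω → ℝ) : natExt H Q h ≤ ⨆ ω, h ω :=
  ciSup_le fun c => iInf_sub_le_iSup hQ c.2 h

theorem mul_natExt_le {l : ℝ} (hl : 0 ≤ l) (h : Ω → ℝ) :
    l * natExt H Q h ≤ natExt H Q fun ω => l * h ω := by
  rw [natExt, Real.mul_iSup_of_nonneg hl]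
  refine ciSup_le fun c => ?_
  rw [Real.mul_iInf_of_nonneg hl]
  simpa only [mul_sub] using le_natExt hQ (const_mul_mem_gainCone c.2 hl) fun ω => l * h ω

variable [Nonempty Ω]

theorem le_natExt_of_mem {g : Ω → ℝ} (hg : g ∈ H) : Q g ≤ natExt H Q g := by
  simpa using le_natExt hQ (sub_mem_gainCone hg) g

theorem natExt_const_mul {l : ℝ} (hl : 0 ≤ l) (h : Ω → ℝ) :
    natExt H Q (fun ω => l * h ω) = l * natExt H Q h := by
  rcases hl.eq_or_lt with rfl | hl
  · simp only [zero_mul]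
    exact le_antisymm (by simpa using natExt_le_iSup hQ fun _ => (0 : ℝ))
      (by simpa using iInf_le_natExt hQ fun _ => (0 : ℝ))
  refine le_antisymm ?_ (mul_natExt_le hQ hl.le h)
  calc natExt H Q (fun ω => l * h ω) = l * (l⁻¹ * natExt H Q fun ω => l * h ω) := by
        rw [mul_inv_cancel_left₀ hl.ne']
    _ ≤ l * natExt H Q (fun ω => l⁻¹ * (l * h ω)) :=
        mul_le_mul_of_nonneg_left (mul_natExt_le hQ (inv_nonneg.2 hl.le) _) hl.le
    _ = l * natExt H Q h := by simp only [inv_mul_cancel_left₀ hl.ne']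

theorem natExt_add_le (h₁ h₂ : Ω → ℝ) : natExt H Q h₁ + natExt H Q h₂ ≤ natExt H Q (h₁ + h₂) := by
  rw [natExt, ciSup_add (bddAbove_range_natExt hQ h₁)]
  refine ciSup_le fun c => ?_
  rw [natExt, add_ciSup (bddAbove_range_natExt hQ h₂)]
  refine ciSup_le fun d => ?_
  refine le_trans (le_ciInf fun ω => ?_) (le_natExt hQ (add_mem_gainCone c.2 d.2) (h₁ + h₂))
  have := ciInf_le (Finite.bddBelow_range fun ω => h₁ ω - c.1 ω) ω
  have := ciInf_le (Finite.bddBelow_range fun ω => h₂ ω - d.1 ω) ω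
  simp only [Pi.add_apply]
  linarith

end AvoidsSureLoss

variable [Nonempty Ω]

theorem LowerPrevCoherent.nonneg_of_mem_gainCone {P : (Ω → ℝ) → ℝ} (hP : LowerPrevCoherent P)
    (hQP : ∀ g ∈ H, Q g ≤ P g) {c : Ω → ℝ} (hc : c ∈ gainCone H Q) : 0 ≤ P c := by
  obtain ⟨n, gs, lam, hgs, hlam, rfl⟩ := hc
  refine (sum_nonneg fun i _ => ?_).trans (hP.sum_le univ fun i ω => lam i * (gs i ω - Q (gs i)))
  rw [hP.2.1 _ _ (hlam i), hP.apply_sub_const]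
  exact mul_nonneg (hlam i) (sub_nonneg.2 (hQP _ (hgs i)))

theorem natExt_le_of_dominates {P : (Ω → ℝ) → ℝ} (hP : LowerPrevCoherent P)
    (hQP : ∀ g ∈ H, Q g ≤ P g) (h : Ω → ℝ) : natExt H Q h ≤ P h := by
  refine ciSup_le fun ⟨c, hc⟩ => ?_
  have hsplit := hP.2.2 (fun ω => h ω - c ω) c
  have hc' := hP.nonneg_of_mem_gainCone hQP hc
  have hinf := hP.1 fun ω => h ω - c ω
  simp only [Pi.add_def, sub_add_cancel] at hsplit
  exact hinf.trans (le_of_add_le_of_nonneg_left hsplit hc')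

theorem natExt_lowerPrevCoherent (hQ : AvoidsSureLoss H Q) : LowerPrevCoherent (natExt H Q) :=
  ⟨iInf_le_natExt hQ, fun h _ hl => natExt_const_mul hQ hl h, natExt_add_le hQ⟩

end NaturalExtension

theorem stmt16_general {X : Type*} [Fintype X] [DecidableEq X] [Nonempty X] {N : ℕ}
    (K : Set ((Fin N → X) → ℝ))
    (P0 : ((Fin N → X) → ℝ) → ℝ)
    (Q : (CVec X N → ℝ) → ℝ)
    (hQ : ∀ g : CVec X N → ℝ,
      Q g = sSup {r : ℝ | ∃ f ∈ K, (fun m => MuHy f m) = g ∧ P0 f = r})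
    (hbdd : ∀ g : CVec X N → ℝ, (∃ f ∈ K, (fun m => MuHy f m) = g) →
      BddAbove {r : ℝ | ∃ f ∈ K, (fun m => MuHy f m) = g ∧ P0 f = r})
    (hasl : ∀ (n : ℕ) (gs : Fin n → (CVec X N → ℝ)) (lam : Fin n → ℝ),
      (∀ i, ∃ f ∈ K, (fun m => MuHy f m) = gs i) → (∀ i, 0 ≤ lam i) →
      ∃ m : CVec X N, 0 ≤ ∑ i, lam i * (gs i m - Q (gs i)))
    (EQ : (CVec X N → ℝ) → ℝ)
    (hEQ : ∀ h : CVec X N → ℝ,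
      EQ h = sSup {r : ℝ | ∃ (n : ℕ) (gs : Fin n → (CVec X N → ℝ)) (lam : Fin n → ℝ),
        (∀ i, ∃ f ∈ K, (fun m => MuHy f m) = gs i) ∧ (∀ i, 0 ≤ lam i) ∧
        r = sInf (Set.range fun m : CVec X N =>
          h m - ∑ i, lam i * (gs i m - Q (gs i)))})
    (F : ((Fin N → X) → ℝ) → ℝ)
    (hF : ∀ f : (Fin N → X) → ℝ, F f = EQ (fun m => MuHy f m)) :
    LowerPrevCoherent F ∧ Exchangeable F ∧ (∀ f ∈ K, P0 f ≤ F f) ∧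
      ∀ E : ((Fin N → X) → ℝ) → ℝ, LowerPrevCoherent E → Exchangeable E →
        (∀ f ∈ K, P0 f ≤ E f) → ∀ f, F f ≤ E f := by
  set H : Set (CVec X N → ℝ) := {g | ∃ f ∈ K, (fun m => MuHy f m) = g}
  have hASL : AvoidsSureLoss H Q := by
    rintro c ⟨n, gs, lam, hgs, hlam, rfl⟩
    exact hasl n gs lam hgs hlam
  obtain rfl : F = fun f => natExt H Q fun m => MuHy f m :=
    funext fun f => (hF f).trans ((hEQ _).trans (natExt_eq_sSup (H := H) (Q := Q) _).symm)
  have hcoh := natExt_lowerPrevCoherent hASL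
  refine ⟨hcoh.comp_MuHy, hcoh.exchangeable_comp_MuHy, fun f hf => ?_, fun E hE hEx hdom f => ?_⟩
  · calc P0 f ≤ Q fun m => MuHy f m := by
          rw [hQ]
          exact le_csSup (hbdd _ ⟨f, hf, rfl⟩) ⟨f, hf, rfl, rfl⟩
      _ ≤ _ := le_natExt_of_mem hASL ⟨f, hf, rfl⟩
  · rw [← hEx.apply_MuHy_countMap hE f]
    refine natExt_le_of_dominates (hE.comp (countMap N)) ?_ _
    rintro _ ⟨f₀, hf₀, rfl⟩
    rw [hQ]
    refine csSup_le ⟨P0 f₀, f₀, hf₀, rfl, rfl⟩ ?_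
    rintro _ ⟨f', hf', hf'f₀, rfl⟩
    rw [← hf'f₀]
    exact (hdom f' hf').trans (hEx.apply_MuHy_countMap hE f').ge

/-- when `Q` is real-valued on `H` and avoids sure loss, the exchangeable
natural extension of `P₀` is `f ↦ E_Q(MuHy^N(f|·))`, with `E_Q` the natural extension
of `Q`. -/
theorem stmt16 {X : Type*} [Fintype X] [DecidableEq X] [Nonempty X] {N : ℕ} (hN : 1 ≤ N)
    (K : Set ((Fin N → X) → ℝ)) (hK : K.Nonempty)
    (P0 : ((Fin N → X) → ℝ) → ℝ)
    (Q : (CVec X N → ℝ) → ℝ)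
    (hQ : ∀ g : CVec X N → ℝ,
      Q g = sSup {r : ℝ | ∃ f ∈ K, (fun m => MuHy f m) = g ∧ P0 f = r})
    (hbdd : ∀ g : CVec X N → ℝ, (∃ f ∈ K, (fun m => MuHy f m) = g) →
      BddAbove {r : ℝ | ∃ f ∈ K, (fun m => MuHy f m) = g ∧ P0 f = r})
    (hasl : ∀ (n : ℕ) (gs : Fin n → (CVec X N → ℝ)) (lam : Fin n → ℝ),
      (∀ i, ∃ f ∈ K, (fun m => MuHy f m) = gs i) → (∀ i, 0 ≤ lam i) →
      ∃ m : CVec X N, 0 ≤ ∑ i, lam i * (gs i m - Q (gs i)))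
    (EQ : (CVec X N → ℝ) → ℝ)
    (hEQ : ∀ h : CVec X N → ℝ,
      EQ h = sSup {r : ℝ | ∃ (n : ℕ) (gs : Fin n → (CVec X N → ℝ)) (lam : Fin n → ℝ),
        (∀ i, ∃ f ∈ K, (fun m => MuHy f m) = gs i) ∧ (∀ i, 0 ≤ lam i) ∧
        r = sInf (Set.range fun m : CVec X N =>
          h m - ∑ i, lam i * (gs i m - Q (gs i)))})
    (F : ((Fin N → X) → ℝ) → ℝ)
    (hF : ∀ f : (Fin N → X) → ℝ, F f = EQ (fun m => MuHy f m)) :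
    LowerPrevCoherent F ∧ Exchangeable F ∧ (∀ f ∈ K, P0 f ≤ F f) ∧
      ∀ E : ((Fin N → X) → ℝ) → ℝ, LowerPrevCoherent E → Exchangeable E →
        (∀ f ∈ K, P0 f ≤ E f) → ∀ f, F f ≤ E f :=
  stmt16_general K P0 Q hQ hbdd hasl EQ hEQ F hF
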